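/- arXiv:2412.13868 — 2 statements merged into one kernel-verified Lean document; each statement's English description precedes it below -/
import Mathlib

section
/- For all real t ≥ 0 and for 0 ≤ s ≤ t, one has ∫₀^t ⟨t-s⟩^{-1} ⟨s⟩^{-1} ds ≤ 2 ⟨t/2⟩^{-1} log(1+T) whenever 0 ≤ t ≤ T, where ⟨s⟩ := √(1+s²). -/
open MeasureTheory intervalIntegral

/-- Japanese bracket `⟨s⟩ = √(1+s²)`. -/
noncomputable def jb (s : ℝ) : ℝ := Real.sqrt (1 + s ^ 2)

lemma jb_pos (s : ℝ) : 0 < jb s := by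
  apply Real.sqrt_pos.2; positivity

lemma jb_mono {a b : ℝ} (ha : 0 ≤ a) (hab : a ≤ b) : jb a ≤ jb b := by
  apply Real.sqrt_le_sqrt; nlinarith

lemma cont_inv_jb : Continuous fun s : ℝ => (jb s)⁻¹ := by
  apply Continuous.inv₀
  · exact (continuous_const.add (continuous_pow 2)).sqrt
  · exact fun x => (jb_pos x).ne'

lemma integral_inv_jb (x : ℝ) : ∫ s in (0:ℝ)..x, (jb s)⁻¹ = Real.arsinh x := by
  rw [show Real.arsinh x = Real.arsinh x - Real.arsinh 0 by simp]
  apply intervalIntegral.integral_eq_sub_of_hasDerivAt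
  · exact fun s _ => Real.hasDerivAt_arsinh s
  · exact (cont_inv_jb.intervalIntegrable 0 x)

lemma arsinh_le_log {x T : ℝ} (hx : 0 ≤ x) (hxT : 2 * x ≤ T) :
    Real.arsinh x ≤ Real.log (1 + T) := by
  rw [Real.arsinh]
  apply Real.log_le_log (by positivity)
  have h : Real.sqrt (1 + x ^ 2) ≤ 1 + x := by
    rw [show (1:ℝ) + x = Real.sqrt ((1+x)^2) by rw [Real.sqrt_sq (by linarith)]]
    apply Real.sqrt_le_sqrt; nlinarith
  linarith

/-- For `0 ≤ t ≤ T`, `∫₀^t ⟨t-s⟩⁻¹ ⟨s⟩⁻¹ ds ≤ 2 ⟨t/2⟩⁻¹ log(1+T)`. -/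
theorem stmt1 (t T : ℝ) (hT : 0 < T) (ht : 0 ≤ t) (htT : t ≤ T) :
    (∫ s in (0:ℝ)..t, (jb (t - s))⁻¹ * (jb s)⁻¹) ≤
      2 * (jb (t / 2))⁻¹ * Real.log (1 + T) := by
  have hcont : Continuous fun s : ℝ => (jb (t - s))⁻¹ * (jb s)⁻¹ :=
    (cont_inv_jb.comp (continuous_const.sub continuous_id)).mul cont_inv_jb
  have hint : ∀ a b : ℝ, IntervalIntegrable (fun s => (jb (t - s))⁻¹ * (jb s)⁻¹) volume a b :=
    fun a b => hcont.intervalIntegrable a b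
  have hsplit : (∫ s in (0:ℝ)..t, (jb (t - s))⁻¹ * (jb s)⁻¹) =
      (∫ s in (0:ℝ)..(t/2), (jb (t - s))⁻¹ * (jb s)⁻¹) +
      (∫ s in (t/2)..t, (jb (t - s))⁻¹ * (jb s)⁻¹) :=
    (intervalIntegral.integral_add_adjacent_intervals (hint _ _) (hint _ _)).symm
  -- second half = ∫₀^{t/2} (jb s)⁻¹ (jb (t-s))⁻¹
  have hsub : (∫ s in (t/2)..t, (jb (t - s))⁻¹ * (jb s)⁻¹) =
      ∫ s in (0:ℝ)..(t/2), (jb (t - s))⁻¹ * (jb s)⁻¹ := by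
    have := intervalIntegral.integral_comp_sub_left
      (a := t/2) (b := t) (fun u => (jb u)⁻¹ * (jb (t - u))⁻¹) t
    simp only [sub_self] at this
    rw [show t - t/2 = t/2 by ring] at this
    calc (∫ s in (t/2)..t, (jb (t - s))⁻¹ * (jb s)⁻¹)
        = ∫ s in (t/2)..t, (fun u => (jb u)⁻¹ * (jb (t - u))⁻¹) (t - s) := by
          congr 1; ext s; simp [mul_comm]
      _ = ∫ s in (0:ℝ)..(t/2), (jb s)⁻¹ * (jb (t - s))⁻¹ := this
      _ = ∫ s in (0:ℝ)..(t/2), (jb (t - s))⁻¹ * (jb s)⁻¹ := by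
          congr 1; ext s; ring
  have key : (∫ s in (0:ℝ)..(t/2), (jb (t - s))⁻¹ * (jb s)⁻¹) ≤
      (jb (t/2))⁻¹ * Real.log (1 + T) := by
    have h1 : (∫ s in (0:ℝ)..(t/2), (jb (t - s))⁻¹ * (jb s)⁻¹) ≤
        ∫ s in (0:ℝ)..(t/2), (jb (t/2))⁻¹ * (jb s)⁻¹ := by
      apply intervalIntegral.integral_mono_on (by linarith) (hint _ _)
        ((continuous_const.mul cont_inv_jb).intervalIntegrable _ _)
      intro s hs
      rcases hs with ⟨hs0, hs1⟩
      have : jb (t/2) ≤ jb (t - s) := jb_mono (by linarith) (by linarith)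
      show (jb (t - s))⁻¹ * (jb s)⁻¹ ≤ (jb (t/2))⁻¹ * (jb s)⁻¹
      gcongr
      · exact inv_nonneg.2 (jb_pos _).le
      · exact jb_pos _
    have h2 : (∫ s in (0:ℝ)..(t/2), (jb (t/2))⁻¹ * (jb s)⁻¹) =
        (jb (t/2))⁻¹ * Real.arsinh (t/2) := by
      rw [intervalIntegral.integral_const_mul, integral_inv_jb]
    have h3 : Real.arsinh (t/2) ≤ Real.log (1 + T) :=
      arsinh_le_log (by linarith) (by linarith)
    calc _ ≤ (jb (t/2))⁻¹ * Real.arsinh (t/2) := by rw [← h2]; exact h1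
      _ ≤ (jb (t/2))⁻¹ * Real.log (1 + T) := by
          gcongr
          exact inv_nonneg.2 (jb_pos _).le
  rw [hsplit, hsub]
  linarith
end

section
/- On a Hilbert space, let n be a nonnegative self-adjoint operator (number operator on a mode) and N ≥ n another nonnegative self-adjoint operator commuting with n, with N ≤ N_max. If b := ((N_max - N)/N_max)^{1/2} a, where a is the annihilation operator with a* a = n and commutation a n = (n+1) a, then b* b* b b ≤ (n-1) n ≤ n² as quadratic forms on the domain where N ≤ N_max. In particular |b b| ≤ n. -/
set_option synthInstance.maxHeartbeats 1000000
set_option maxHeartbeats 4000000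

open ContinuousLinearMap
open scoped InnerProductSpace ComplexConjugate

open Polynomial in
lemma commute_cfc_real' {A : Type*} [CStarAlgebra A]
    {c d : A} (hd : IsSelfAdjoint d) (h : Commute c d) (f : ℝ → ℝ) :
    Commute c (cfc f d) := by
  have haeval : ∀ p : ℝ[X], Commute c (Polynomial.aeval d p) := by
    intro p
    induction p using Polynomial.induction_on' with
    | add p q hp hq => simpa [map_add] using hp.add_right hq
    | monomial k r =>
        simp only [Polynomial.aeval_monomial]
        exact Commute.mul_right (show Commute c _ from (Algebra.commutes r c).symm)
          (h.pow_right k)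
  by_cases hf : ContinuousOn f (spectrum ℝ d)
  · rw [cfc_apply f d hd hf]
    have hS : IsClosed {g : C(spectrum ℝ d, ℝ) | Commute c (cfcHom hd g)} :=
      isClosed_eq ((continuous_mul_left c).comp (cfcHom_continuous hd))
        ((continuous_mul_right c).comp (cfcHom_continuous hd))
    have hsub : (polynomialFunctions (spectrum ℝ d) : Set C(spectrum ℝ d, ℝ)) ⊆
        {g : C(spectrum ℝ d, ℝ) | Commute c (cfcHom hd g)} := by
      rw [polynomialFunctions_coe]
      rintro _ ⟨p, rfl⟩
      have hhom : ((cfcHom hd : C(spectrum ℝ d, ℝ) →⋆ₐ[ℝ] A).toAlgHom.comp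
          (Polynomial.toContinuousMapOnAlgHom (spectrum ℝ d))) =
          Polynomial.aeval d := by
        apply Polynomial.algHom_ext
        simp only [AlgHom.coe_comp, Function.comp_apply, Polynomial.aeval_X]
        show cfcHom hd (Polynomial.X.toContinuousMapOn (spectrum ℝ d)) = d
        have hid : (Polynomial.X : ℝ[X]).toContinuousMapOn (spectrum ℝ d)
            = (ContinuousMap.id ℝ).restrict (spectrum ℝ d) := by
          ext x; simp
        rw [hid, cfcHom_id hd]
      have hX : cfcHom hd ((Polynomial.toContinuousMapOnAlgHom (spectrum ℝ d)) p)
          = Polynomial.aeval d p := congrFun (congrArg DFunLike.coe hhom) p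
      show Commute c _
      rw [hX]
      exact haeval p
    have hg : ∀ g : C(spectrum ℝ d, ℝ),
        g ∈ closure (polynomialFunctions (spectrum ℝ d) : Set C(spectrum ℝ d, ℝ)) := by
      intro g
      rw [← Subalgebra.topologicalClosure_coe,
        polynomialFunctions.topologicalClosure (spectrum ℝ d)]
      trivial
    exact closure_minimal hsub hS (hg _)
  · rw [cfc_apply_of_not_continuousOn d hf]
    exact Commute.zero_right c

open scoped NNReal in
lemma commute_sqrt' {A : Type*} [CStarAlgebra A] [PartialOrder A] [StarOrderedRing A]
    {c d : A} (hd : 0 ≤ d) (h : Commute c d) : Commute c (CFC.sqrt d) := by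
  rw [CFC.sqrt_eq_cfc, cfc_nnreal_eq_real _ _ hd]
  exact commute_cfc_real' (IsSelfAdjoint.of_nonneg hd) h _

set_option maxHeartbeats 2000000 in
/-- The operator inequality `b* b* b b ≤ (n-1) n ≤ n²` (hence `|bb| ≤ n`)
for the modified annihilation operator `b = √((N_max - N)/N_max) a`, where
`a* a = n`, `a n = (n+1) a`, and `0 ≤ n ≤ N ≤ N_max` with `N` commuting
with `n`. -/
theorem stmt14 {H : Type*} [NormedAddCommGroup H] [InnerProductSpace ℂ H]
    [CompleteSpace H]
    (a n N sq : H →L[ℂ] H) (Nmax : ℝ) (hNmax : 0 < Nmax)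
    (hn_sa : IsSelfAdjoint n) (hn_pos : ∀ ψ : H, 0 ≤ (⟪ψ, n ψ⟫_ℂ).re)
    (hN_sa : IsSelfAdjoint N) (hN_pos : ∀ ψ : H, 0 ≤ (⟪ψ, N ψ⟫_ℂ).re)
    (hNn_comm : N ∘L n = n ∘L N)
    (hn_le_N : ∀ ψ : H, (⟪ψ, n ψ⟫_ℂ).re ≤ (⟪ψ, N ψ⟫_ℂ).re)
    (hN_le : ∀ ψ : H, (⟪ψ, N ψ⟫_ℂ).re ≤ Nmax * ‖ψ‖ ^ 2)
    (ha : (ContinuousLinearMap.adjoint a) ∘L a = n)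
    (hcomm : a ∘L n = (n + 1) ∘L a)
    (hsq_sa : IsSelfAdjoint sq) (hsq_pos : ∀ ψ : H, 0 ≤ (⟪ψ, sq ψ⟫_ℂ).re)
    (hsq2 : sq ∘L sq = ((Nmax : ℂ))⁻¹ • ((Nmax : ℂ) • (1 : H →L[ℂ] H) - N))
    (b : H →L[ℂ] H) (hb : b = sq ∘L a) :
    ∀ ψ : H,
      ‖(b ∘L b) ψ‖ ^ 2 ≤ (⟪ψ, ((n - 1) ∘L n) ψ⟫_ℂ).re ∧
      (⟪ψ, ((n - 1) ∘L n) ψ⟫_ℂ).re ≤ (⟪ψ, (n ∘L n) ψ⟫_ℂ).re := by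
  -- helper: nonnegativity from inner products
  have pos_of : ∀ T : H →L[ℂ] H, IsSelfAdjoint T → (∀ ψ : H, 0 ≤ (⟪ψ, T ψ⟫_ℂ).re) →
      (0 : H →L[ℂ] H) ≤ T := by
    intro T hT h
    rw [ContinuousLinearMap.nonneg_iff_isPositive]
    refine ⟨hT.isSymmetric, fun x => ?_⟩
    have := h x
    rwa [ContinuousLinearMap.reApplyInnerSelf_apply, ← inner_conj_symm, RCLike.conj_re]
  have le_inner : ∀ S T : H →L[ℂ] H, S ≤ T → ∀ ψ : H,
      (⟪ψ, S ψ⟫_ℂ).re ≤ (⟪ψ, T ψ⟫_ℂ).re := by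
    intro S T h ψ
    have hP : (T - S).IsPositive := h
    have := hP.inner_nonneg_right ψ
    rw [ContinuousLinearMap.sub_apply, inner_sub_right] at this
    have : 0 ≤ (⟪ψ, T ψ⟫_ℂ - ⟪ψ, S ψ⟫_ℂ).re := (Complex.le_def.mp this).1
    rw [Complex.sub_re] at this
    linarith
  have hn0 : (0 : H →L[ℂ] H) ≤ n := pos_of n hn_sa hn_pos
  have hsq0 : (0 : H →L[ℂ] H) ≤ sq := pos_of sq hsq_sa hsq_pos
  -- M = sq * sq
  set M : H →L[ℂ] H := sq * sq with hM_def
  have hM0 : (0 : H →L[ℂ] H) ≤ M := by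
    have := star_mul_self_nonneg sq
    rwa [hsq_sa.star_eq] at this
  -- commutation of n with N and with M
  have hnN : Commute n N := (show Commute N n from hNn_comm).symm
  have hnM : Commute n M := by
    rw [hM_def, show sq * sq = sq ∘L sq from rfl, hsq2]
    exact (((Commute.one_right n).smul_right _).sub_right hnN).smul_right _
  -- 1 - M = Nmax⁻¹ • N ≥ 0
  have h1M_eq : (1 : H →L[ℂ] H) - M = ((Nmax : ℂ))⁻¹ • N := by
    rw [hM_def, show sq * sq = sq ∘L sq from rfl, hsq2, smul_sub, smul_smul,
      inv_mul_cancel₀ (by exact_mod_cast hNmax.ne' : (Nmax : ℂ) ≠ 0), one_smul]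
    abel
  have h1M : (0 : H →L[ℂ] H) ≤ 1 - M := by
    rw [h1M_eq]
    refine pos_of _ ?_ ?_
    · have h1 : star ((Nmax:ℂ)⁻¹) = (Nmax:ℂ)⁻¹ := by
        rw [RCLike.star_def, map_inv₀, Complex.conj_ofReal]
      show star _ = _
      rw [star_smul, h1, hN_sa.star_eq]
    · intro ψ
      rw [ContinuousLinearMap.smul_apply, inner_smul_right,
        show ((Nmax : ℂ))⁻¹ = ((Nmax⁻¹ : ℝ) : ℂ) by push_cast; ring, Complex.re_ofReal_mul]
      exact mul_nonneg (inv_nonneg.mpr hNmax.le) (hN_pos ψ)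
  have hM1 : M ≤ 1 := sub_nonneg.mp h1M
  -- sq = sqrt M, hence commutes with n
  have hsq_sqrt : CFC.sqrt M = sq := CFC.sqrt_unique rfl hsq0
  have hn_sq : Commute n sq := hsq_sqrt ▸ commute_sqrt' hM0 hnM
  -- r = sqrt n commutes with 1 - M
  have h1M_n : Commute ((1 : H →L[ℂ] H) - M) n := ((Commute.one_right n).sub_right hnM).symm
  have h1M_r : Commute ((1 : H →L[ℂ] H) - M) (CFC.sqrt n) := commute_sqrt' hn0 h1M_n
  set r : H →L[ℂ] H := CFC.sqrt n with hr_def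
  have hr0 : (0 : H →L[ℂ] H) ≤ r := CFC.sqrt_nonneg n
  have hrr : r * r = n := CFC.sqrt_mul_sqrt_self n hn0
  -- n * M ≤ n
  have hnM_le : n * M ≤ n := by
    rw [← sub_nonneg]
    have key : n - n * M = star r * ((1 - M) * r) := by
      rw [(IsSelfAdjoint.of_nonneg hr0).star_eq, h1M_r.eq,
        show r * (r * (1 - M)) = r * r * (1 - M) from (mul_assoc r r (1 - M)).symm,
        hrr, mul_sub, mul_one]
    rw [key, ← mul_assoc]
    exact star_left_conjugate_nonneg h1M r
  -- star a * a = n (in mul notation), star = adjoint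
  have hstar_a : star a * a = n := ha
  -- n * a = a * n - a
  have hna : n * a = a * n - a := by
    have : a * n = n * a + a := by
      have h1 : a ∘L n = (n + 1) ∘L a := hcomm
      have : a * n = (n + 1) * a := h1
      rw [this, add_mul, one_mul]
    rw [this]; abel
  -- the key operator B
  set B : H →L[ℂ] H := star (b * b) * (b * b) with hB_def
  set y : H →L[ℂ] H := a * sq * a with hy_def
  have hB_eq : B = star y * M * y := by
    rw [hB_def, hy_def, hM_def, hb]
    show star ((sq ∘L a) * (sq ∘L a)) * ((sq ∘L a) * (sq ∘L a)) = _
    rw [show (sq ∘L a : H →L[ℂ] H) = sq * a from rfl]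
    simp only [star_mul, hsq_sa.star_eq, mul_assoc]
  have hstep1 : B ≤ star y * y := by
    rw [hB_eq]
    calc star y * M * y ≤ star y * 1 * y := star_left_conjugate_le_conjugate hM1 y
      _ = star y * y := by rw [mul_one]
  have hyy : star y * y = star a * (n * M) * a := by
    rw [hy_def]
    simp only [star_mul, hsq_sa.star_eq]
    calc star a * sq * star a * (a * sq * a)
        = star a * (sq * ((star a * a) * sq)) * a := by simp only [mul_assoc]
      _ = star a * (sq * (n * sq)) * a := by rw [hstar_a]
      _ = star a * (n * (sq * sq)) * a := by
          rw [show sq * (n * sq) = n * (sq * sq) by rw [← mul_assoc, ← hn_sq.eq, mul_assoc]]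
      _ = star a * (n * M) * a := by rw [hM_def]
  have hstep2 : star a * (n * M) * a ≤ star a * n * a := star_left_conjugate_le_conjugate hnM_le a
  have hana : star a * n * a = n * n - n := by
    rw [mul_assoc, hna, mul_sub, ← mul_assoc, hstar_a]
  have hfinal : B ≤ n * n - n := by
    calc B ≤ star y * y := hstep1
      _ = star a * (n * M) * a := hyy
      _ ≤ star a * n * a := hstep2
      _ = n * n - n := hana
  -- now the pointwise statements
  intro ψ
  have hgoal_eq : ((n - 1) ∘L n : H →L[ℂ] H) = n * n - n := by
    show (n - 1) * n = n * n - n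
    rw [sub_mul, one_mul]
  have hnorm : ‖(b ∘L b) ψ‖ ^ 2 = (⟪ψ, B ψ⟫_ℂ).re := by
    rw [hB_def]
    have h1 : (⟪ψ, (star (b * b) * (b * b)) ψ⟫_ℂ) = ⟪(b * b) ψ, (b * b) ψ⟫_ℂ := by
      rw [show (star (b * b) * (b * b) : H →L[ℂ] H) ψ
          = (ContinuousLinearMap.adjoint (b * b)) ((b * b) ψ) from rfl]
      exact ContinuousLinearMap.adjoint_inner_right _ _ _
    rw [h1, show (b ∘L b : H →L[ℂ] H) = b * b from rfl,
      inner_self_eq_norm_sq_to_K (𝕜 := ℂ), ← RCLike.ofReal_pow]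
    exact (RCLike.ofReal_re (K := ℂ) _).symm
  constructor
  · rw [hnorm, hgoal_eq]
    exact le_inner _ _ hfinal ψ
  · have hle : ((n - 1) ∘L n : H →L[ℂ] H) ≤ n ∘L n := by
      rw [hgoal_eq, show (n ∘L n : H →L[ℂ] H) = n * n from rfl, ← sub_nonneg]
      have h' : n * n - (n * n - n) = n := by abel
      rw [h']
      exact hn0
    exact le_inner _ _ hle ψ
end
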